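/- arXiv:2012.15707 — 2 statements merged into one kernel-verified Lean document; each statement's English description precedes it below -/
import Mathlib

section
/- There is an involutive duality between weakly right admissible subcategories T and weakly left admissible subcategories F of an exact category E, given by T ↦ T^{⊥₀} and F ↦ ^{⊥₀}F; in particular, if T is weakly right admissible then T = ^{⊥₀}(T^{⊥₀}), T is closed under quotients (cokernels of deflations out of objects of T land in T up to the torsion decomposition), and T^{⊥₀} is closed under subobjects. -/
open CategoryTheory CategoryTheory.Limits ZeroObject

universe v u

namespace ExactCatPaper

variable (E : Type u) [Category.{v} E] [Preadditive E] [HasZeroObject E]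

/-- An exact structure on an additive category `E`, following Quillen/Keller:
a class of conflations (kernel–cokernel pairs) closed under isomorphism,
containing identities, with deflations closed under composition and stable
under pullback, and inflations stable under pushout. -/
structure ExactStructure where
  conf : ∀ {X Y Z : E}, (X ⟶ Y) → (Y ⟶ Z) → Prop
  comp_zero : ∀ {X Y Z : E} {i : X ⟶ Y} {d : Y ⟶ Z}, conf i d → i ≫ d = 0
  is_kernel : ∀ {X Y Z : E} {i : X ⟶ Y} {d : Y ⟶ Z}, conf i d →
    ∀ {W : E} (f : W ⟶ Y), f ≫ d = 0 → ∃! g : W ⟶ X, g ≫ i = f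
  is_cokernel : ∀ {X Y Z : E} {i : X ⟶ Y} {d : Y ⟶ Z}, conf i d →
    ∀ {W : E} (f : Y ⟶ W), i ≫ f = 0 → ∃! g : Z ⟶ W, d ≫ g = f
  conf_iso : ∀ {X Y Z X' Y' Z' : E} (eX : X ≅ X') (eY : Y ≅ Y') (eZ : Z ≅ Z')
      {i : X ⟶ Y} {d : Y ⟶ Z}, conf i d →
      conf (eX.inv ≫ i ≫ eY.hom) (eY.inv ≫ d ≫ eZ.hom)
  conf_id : ∀ X : E, conf (0 : (0 : E) ⟶ X) (𝟙 X)
  defl_comp : ∀ {X Y Z : E} {d : X ⟶ Y} {d' : Y ⟶ Z},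
      (∃ (A : E) (i : A ⟶ X), conf i d) → (∃ (A : E) (i : A ⟶ Y), conf i d') →
      ∃ (A : E) (i : A ⟶ X), conf i (d ≫ d')
  pullback_defl : ∀ {Y Z W : E} (d : Y ⟶ Z) (f : W ⟶ Z),
      (∃ (A : E) (i : A ⟶ Y), conf i d) →
      ∃ (P : E) (p₁ : P ⟶ Y) (p₂ : P ⟶ W), IsPullback p₁ p₂ d f ∧
        ∃ (A : E) (i : A ⟶ P), conf i p₂
  pushout_infl : ∀ {X Y W : E} (i : X ⟶ Y) (f : X ⟶ W),
      (∃ (Z : E) (d : Y ⟶ Z), conf i d) →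
      ∃ (P : E) (j : W ⟶ P) (g : Y ⟶ P), IsPushout i f g j ∧
        ∃ (Z : E) (d : P ⟶ Z), conf j d

variable {E}

/-- `i` is an inflation: it is part of some conflation. -/
def ExactStructure.IsInflation (S : ExactStructure E) {X Y : E} (i : X ⟶ Y) : Prop :=
  ∃ (Z : E) (d : Y ⟶ Z), S.conf i d

/-- `d` is a deflation: it is part of some conflation. -/
def ExactStructure.IsDeflation (S : ExactStructure E) {Y Z : E} (d : Y ⟶ Z) : Prop :=
  ∃ (X : E) (i : X ⟶ Y), S.conf i d

/-- The right Hom-orthogonal `T^{⊥₀}` of a full subcategory. -/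
def homOrthRight (T : Set E) : Set E :=
  {X | ∀ t ∈ T, ∀ f : t ⟶ X, f = 0}

/-- The left Hom-orthogonal `^{⊥₀}F` of a full subcategory. -/
def homOrthLeft (F : Set E) : Set E :=
  {X | ∀ f' ∈ F, ∀ g : X ⟶ f', g = 0}

/-- A full subcategory is closed under extensions. -/
def ExtClosed (S : ExactStructure E) (T : Set E) : Prop :=
  ∀ {X Y Z : E} {i : X ⟶ Y} {d : Y ⟶ Z}, S.conf i d → X ∈ T → Z ∈ T → Y ∈ T

/-- `T` is weakly right admissible: a fully exact (extension-closed) subcategory such that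
the inclusion admits a right adjoint (expressed pointwise as a coreflection) whose
adjunction counit is an inflation. -/
def IsWeaklyRightAdmissible (S : ExactStructure E) (T : Set E) : Prop :=
  ExtClosed S T ∧
  ∀ X : E, ∃ (T' : E) (ε : T' ⟶ X), T' ∈ T ∧ S.IsInflation ε ∧
    ∀ W : E, W ∈ T → ∀ f : W ⟶ X, ∃! g : W ⟶ T', g ≫ ε = f

/-- `F` is weakly left admissible: the dual notion. -/
def IsWeaklyLeftAdmissible (S : ExactStructure E) (F : Set E) : Prop :=
  ExtClosed S F ∧
  ∀ X : E, ∃ (F' : E) (η : X ⟶ F'), F' ∈ F ∧ S.IsDeflation η ∧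
    ∀ W : E, W ∈ F → ∀ f : X ⟶ W, ∃! g : F' ⟶ W, η ≫ g = f

/-- `(T, F)` is a torsion pair: `Hom(T,F) = 0` and every object fits into a conflation
with torsion part in `T` and torsion-free part in `F`. -/
def IsTorsionPair (S : ExactStructure E) (T F : Set E) : Prop :=
  (∀ t ∈ T, ∀ f ∈ F, ∀ g : t ⟶ f, g = 0) ∧
  ∀ X : E, ∃ (t f : E) (i : t ⟶ X) (d : X ⟶ f), t ∈ T ∧ f ∈ F ∧ S.conf i d

/-- The right perpendicular subcategory `T^⊥` (Hom and Ext¹ vanishing; Ext¹-vanishing is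
expressed by the splitting of all conflations `X → M → t` with `t ∈ T`). -/
def rightPerp (S : ExactStructure E) (T : Set E) : Set E :=
  {X | ∀ t ∈ T, (∀ f : t ⟶ X, f = 0) ∧
    ∀ (M : E) (i : X ⟶ M) (d : M ⟶ t), S.conf i d → ∃ r : M ⟶ X, i ≫ r = 𝟙 X}

/-- A torsion pair `(T,F)` is perpendicular if moreover `Ext¹(T,F) = 0`, i.e. every
conflation `f' → X → t` with `f' ∈ F`, `t ∈ T` splits. -/
def IsPerpTorsionPair (S : ExactStructure E) (T F : Set E) : Prop :=
  IsTorsionPair S T F ∧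
  ∀ {f' X t : E} (i : f' ⟶ X) (d : X ⟶ t), S.conf i d → f' ∈ F → t ∈ T →
    ∃ r : X ⟶ f', i ≫ r = 𝟙 f'


/-- A full subcategory (as a class of objects) closed under isomorphisms. -/
def IsoClosed (T : Set E) : Prop := ∀ {X Y : E}, (X ≅ Y) → X ∈ T → Y ∈ T

/-!
The counit `T' → X` of a weakly right admissible `T` is an inflation with cokernel `F`. Pulling
this conflation back along a map `s → F` with `s ∈ T` gives a conflation `T' → P → s`, so
`P ∈ T` by extension closure; hence `P → F` factors through `T' → X → F` and vanishes, and
since `P → s` is epic, so does `s → F`. Thus `(T, T^{⊥₀})` is a torsion pair, and everything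
else is a formal consequence of the torsion pair. The left admissible case is dual, using
pushouts.
-/

namespace ExactStructure

variable (S : ExactStructure E) {A Y Z : E} {i : A ⟶ Y} {d : Y ⟶ Z}

lemma mono_of_conf (h : S.conf i d) : Mono i := by
  refine ⟨fun a b hab => ?_⟩
  obtain ⟨g, -, hg⟩ :=
    S.is_kernel h (a ≫ i) (by rw [Category.assoc, S.comp_zero h, Limits.comp_zero])
  exact (hg a rfl).trans (hg b hab.symm).symm

lemma epi_of_conf (h : S.conf i d) : Epi d := by
  refine ⟨fun a b hab => ?_⟩
  obtain ⟨g, -, hg⟩ :=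
    S.is_cokernel h (d ≫ a) (by rw [← Category.assoc, S.comp_zero h, zero_comp])
  exact (hg a rfl).trans (hg b hab.symm).symm

lemma isIso_of_conf_of_eq_zero_right (h : S.conf i d) (hd : d = 0) : IsIso i := by
  obtain ⟨g, hg, -⟩ := S.is_kernel h (𝟙 Y) (by rw [Category.id_comp, hd])
  have := S.mono_of_conf h
  have : IsSplitEpi i := .mk' ⟨g, hg⟩
  exact isIso_of_mono_of_isSplitEpi i

lemma isIso_of_conf_of_eq_zero_left (h : S.conf i d) (hi : i = 0) : IsIso d := by
  obtain ⟨g, hg, -⟩ := S.is_cokernel h (𝟙 Y) (by rw [Category.comp_id, hi])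
  have := S.epi_of_conf h
  have : IsSplitMono d := .mk' ⟨g, hg⟩
  exact isIso_of_epi_of_isSplitMono d

lemma conf_lift_of_isPullback {W P : E} {f : W ⟶ Z} {p₁ : P ⟶ Y} {p₂ : P ⟶ W}
    (h : S.conf i d) (hpb : IsPullback p₁ p₂ d f) (hp₂ : S.IsDeflation p₂) :
    S.conf (hpb.lift i 0 (by rw [S.comp_zero h, zero_comp])) p₂ := by
  obtain ⟨A', ι, hι⟩ := hp₂
  set u := hpb.lift i 0 (by rw [S.comp_zero h, zero_comp])
  obtain ⟨k, hk, -⟩ := S.is_kernel hι u (hpb.lift_snd _ _ _)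
  obtain ⟨k', hk', -⟩ := S.is_kernel h (ι ≫ p₁)
    (by rw [Category.assoc, hpb.w, ← Category.assoc, S.comp_zero hι, zero_comp])
  have := S.mono_of_conf h
  have := S.mono_of_conf hι
  let e : A' ≅ A :=
    { hom := k'
      inv := k
      hom_inv_id := by
        rw [← cancel_mono ι, Category.assoc, hk, Category.id_comp]
        apply hpb.hom_ext
        · rw [Category.assoc, hpb.lift_fst, hk']
        · rw [Category.assoc, hpb.lift_snd, Limits.comp_zero, S.comp_zero hι]
      inv_hom_id := by
        rw [← cancel_mono i, Category.assoc, hk', ← Category.assoc, hk, hpb.lift_fst,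
          Category.id_comp] }
  simpa [e, hk] using S.conf_iso e (Iso.refl P) (Iso.refl W) hι

lemma conf_desc_of_isPushout {W P : E} {f : A ⟶ W} {g : Y ⟶ P} {j : W ⟶ P}
    (h : S.conf i d) (hpo : IsPushout i f g j) (hj : S.IsInflation j) :
    S.conf j (hpo.desc d 0 (by rw [S.comp_zero h, Limits.comp_zero])) := by
  obtain ⟨Z', e', he'⟩ := hj
  set v := hpo.desc d 0 (by rw [S.comp_zero h, Limits.comp_zero])
  obtain ⟨k, hk, -⟩ := S.is_cokernel he' v (hpo.inr_desc _ _ _)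
  obtain ⟨k', hk', -⟩ := S.is_cokernel h (g ≫ e')
    (by rw [← Category.assoc, hpo.w, Category.assoc, S.comp_zero he', Limits.comp_zero])
  have := S.epi_of_conf h
  have := S.epi_of_conf he'
  let e : Z' ≅ Z :=
    { hom := k
      inv := k'
      hom_inv_id := by
        rw [← cancel_epi e', ← Category.assoc, hk, Category.comp_id]
        apply hpo.hom_ext
        · rw [← Category.assoc, hpo.inl_desc, hk']
        · rw [← Category.assoc, hpo.inr_desc, zero_comp, S.comp_zero he']
      inv_hom_id := by
        rw [← cancel_epi d, ← Category.assoc, hk', Category.assoc, hk, hpo.inl_desc,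
          Category.comp_id] }
  simpa [e, hk] using S.conf_iso (Iso.refl W) (Iso.refl P) e he'

end ExactStructure

lemma homOrthRight_extClosed (S : ExactStructure E) (T : Set E) :
    ExtClosed S (homOrthRight T) := fun h hX hZ t ht f => by
  obtain ⟨g, rfl, -⟩ := S.is_kernel h f (hZ t ht _)
  rw [hX t ht g, zero_comp]

lemma homOrthLeft_extClosed (S : ExactStructure E) (F : Set E) :
    ExtClosed S (homOrthLeft F) := fun h hX hZ f hf g => by
  obtain ⟨g', rfl, -⟩ := S.is_cokernel h g (hX f hf _)
  rw [hZ f hf g', comp_zero]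

namespace IsTorsionPair

variable {S : ExactStructure E} {T F : Set E}

lemma isWeaklyRightAdmissible (h : IsTorsionPair S T F) (hT : ExtClosed S T) :
    IsWeaklyRightAdmissible S T := by
  refine ⟨hT, fun X => ?_⟩
  obtain ⟨t, f, i, d, ht, hf, hconf⟩ := h.2 X
  exact ⟨t, i, ht, ⟨f, d, hconf⟩, fun W hW g => S.is_kernel hconf g (h.1 W hW f hf _)⟩

lemma isWeaklyLeftAdmissible (h : IsTorsionPair S T F) (hF : ExtClosed S F) :
    IsWeaklyLeftAdmissible S F := by
  refine ⟨hF, fun X => ?_⟩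
  obtain ⟨t, f, i, d, ht, hf, hconf⟩ := h.2 X
  exact ⟨f, d, hf, ⟨t, i, hconf⟩, fun W hW g => S.is_cokernel hconf g (h.1 t ht W hW _)⟩

lemma homOrthLeft_eq (h : IsTorsionPair S T F) (hT : IsoClosed T) : homOrthLeft F = T := by
  refine Set.Subset.antisymm (fun X hX => ?_) (fun t ht f hf g => h.1 t ht f hf g)
  obtain ⟨t, f, i, d, ht, hf, hconf⟩ := h.2 X
  have := S.isIso_of_conf_of_eq_zero_right hconf (hX f hf d)
  exact hT (asIso i) ht

lemma homOrthRight_eq (h : IsTorsionPair S T F) (hF : IsoClosed F) : homOrthRight T = F := by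
  refine Set.Subset.antisymm (fun X hX => ?_) (fun f hf t ht g => h.1 t ht f hf g)
  obtain ⟨t, f, i, d, ht, hf, hconf⟩ := h.2 X
  have := S.isIso_of_conf_of_eq_zero_left hconf (hX t ht i)
  exact hF (asIso d).symm hf

end IsTorsionPair

lemma IsWeaklyRightAdmissible.isTorsionPair {S : ExactStructure E} {T : Set E}
    (hT : IsWeaklyRightAdmissible S T) : IsTorsionPair S T (homOrthRight T) := by
  refine ⟨fun t ht f hf g => hf t ht g, fun X => ?_⟩
  obtain ⟨t, ε, ht, ⟨f, d, hconf⟩, huniv⟩ := hT.2 X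
  refine ⟨t, f, ε, d, ht, fun s hs φ => ?_, hconf⟩
  obtain ⟨P, p₁, p₂, hpb, A, ι, hι⟩ := S.pullback_defl d φ ⟨t, ε, hconf⟩
  have hP : P ∈ T := hT.1 (S.conf_lift_of_isPullback hconf hpb ⟨A, ι, hι⟩) ht hs
  obtain ⟨g, hg, -⟩ := huniv P hP p₁
  have := S.epi_of_conf hι
  rw [← cancel_epi p₂, ← hpb.w, ← hg, Category.assoc, S.comp_zero hconf, comp_zero,
    comp_zero]

lemma IsWeaklyLeftAdmissible.isTorsionPair {S : ExactStructure E} {F : Set E}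
    (hF : IsWeaklyLeftAdmissible S F) : IsTorsionPair S (homOrthLeft F) F := by
  refine ⟨fun t ht f hf g => ht f hf g, fun X => ?_⟩
  obtain ⟨f, η, hf, ⟨t, i, hconf⟩, huniv⟩ := hF.2 X
  refine ⟨t, f, i, η, fun s hs φ => ?_, hf, hconf⟩
  obtain ⟨P, j, g, hpo, Z, e, he⟩ := S.pushout_infl i φ ⟨f, η, hconf⟩
  have hP : P ∈ F := hF.1 (S.conf_desc_of_isPushout hconf hpo ⟨Z, e, he⟩) hs hf
  obtain ⟨k, hk, -⟩ := huniv P hP g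
  have := S.mono_of_conf he
  rw [← cancel_mono j, ← hpo.w, ← hk, ← Category.assoc, S.comp_zero hconf, zero_comp,
    zero_comp]

/-- There is an involutive duality between weakly right admissible
subcategories `T` and weakly left admissible subcategories `F` of an exact category,
given by `T ↦ T^{⊥₀}` and `F ↦ ^{⊥₀}F`.  In particular, if `T` is weakly right
admissible then `T^{⊥₀}` is weakly left admissible and `T = ^{⊥₀}(T^{⊥₀})`, `T` is
closed under quotients, and `T^{⊥₀}` is closed under subobjects. -/
theorem weakly_admissible_duality (S : ExactStructure E) :
    (∀ T : Set E, IsoClosed T → IsWeaklyRightAdmissible S T →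
      IsWeaklyLeftAdmissible S (homOrthRight T) ∧
      homOrthLeft (homOrthRight T) = T ∧
      (∀ {t X : E} (d : t ⟶ X), Epi d → t ∈ T → X ∈ T) ∧
      (∀ {X f : E} (m : X ⟶ f), Mono m → f ∈ homOrthRight T → X ∈ homOrthRight T)) ∧
    (∀ F : Set E, IsoClosed F → IsWeaklyLeftAdmissible S F →
      IsWeaklyRightAdmissible S (homOrthLeft F) ∧
      homOrthRight (homOrthLeft F) = F) := by
  refine ⟨fun T hIso hT => ?_, fun F hIso hF => ?_⟩
  · have hTF := hT.isTorsionPair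
    have hT_eq := hTF.homOrthLeft_eq hIso
    refine ⟨hTF.isWeaklyLeftAdmissible (homOrthRight_extClosed S T), hT_eq,
      fun d _ ht => ?_, fun m _ hf t ht g => ?_⟩
    · rw [← hT_eq] at ht ⊢
      exact fun f hf g => by rw [← cancel_epi d, ht f hf (d ≫ g), comp_zero]
    · rw [← cancel_mono m, hf t ht (g ≫ m), zero_comp]
  · have hTF := hF.isTorsionPair
    exact ⟨hTF.isWeaklyRightAdmissible (homOrthLeft_extClosed S F), hTF.homOrthRight_eq hIso⟩

end ExactCatPaper
end

section
/- A weakly left admissible subcategory F of an exact category E is left admissible (i.e. additionally Ext¹(^{⊥₀}F, F) = 0, so the torsion pair (^{⊥₀}F, F) is perpendicular) if and only if the left adjoint δ^* : E → F of the inclusion is an exact functor. Dually, a weakly right admissible subcategory T is right admissible if and only if the right adjoint ι^! : E → T of the inclusion is exact. -/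
open CategoryTheory CategoryTheory.Limits ZeroObject

universe v u

namespace ExactCatPaper

variable (E : Type u) [Category.{v} E] [Preadditive E] [HasZeroObject E]

variable {E}

/-!
If `Ext¹(^{⊥₀}F, F) = 0`, the reflection of a conflation `X → Y → Z` is computed by hand: pushing
out along the unit of `X` gives a conflation `δ^*X → P → Z`; pulling it back along the kernel
`K ∈ ^{⊥₀}F` of the unit of `Z` gives a conflation `δ^*X → Q → K`, which splits; pushing the
conflation `Q → P → δ^*Z` out along the splitting gives a conflation `δ^*X → M → δ^*Z` with `M ∈ F`,
and `M` turns out to be the reflection of `Y`. Conversely, an exact `δ^*` kills `t ∈ ^{⊥₀}F`, so it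
turns a conflation `f → X → t` with `f ∈ F` into an isomorphism `f ≅ δ^*X`, whose inverse splits
it.

The statement for `T` is the one for `F` in the opposite exact category. That `Eᵒᵖ` is exact rests
on inflations of `E` being closed under composition, which follows from the obscure axiom.
-/

section Biproduct

variable {C : Type*} [Category C] [Preadditive C] [HasBinaryBiproducts C]

lemma isPullback_biprod_desc {k W Y Z : C} {κ : k ⟶ Y} {d : Y ⟶ Z} [Mono κ] (hκ : κ ≫ d = 0)
    (hfac : ∀ {V : C} (f : V ⟶ Y), f ≫ d = 0 → ∃ g, g ≫ κ = f) (e : W ⟶ Y) :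
    IsPullback biprod.fst (biprod.desc e κ) (e ≫ d) d := by
  refine IsPullback.mk' (by ext <;> simp [hκ]) (fun T φ φ' h₁ h₂ => ?_) fun T a b hab => ?_
  · refine biprod.hom_ext _ _ h₁ ((cancel_mono κ).1 ?_)
    simpa [biprod.desc_eq, reassoc_of% h₁] using h₂
  · obtain ⟨c, hc⟩ := hfac (b - a ≫ e) (by simp [hab])
    exact ⟨biprod.lift a c, by simp, by simp [hc]⟩

lemma isPullback_biprod_map {K A : C} (Y : C) (p : K ⟶ A) :
    IsPullback biprod.snd (biprod.map (𝟙 Y) p) p biprod.snd := by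
  refine IsPullback.mk' (by simp) (fun T φ φ' h₁ h₂ => ?_) fun T a b hab => ?_
  · exact biprod.hom_ext _ _ (by simpa using congrArg (· ≫ biprod.fst) h₂) h₁
  · exact ⟨biprod.lift (b ≫ biprod.fst) a, by simp, by ext <;> simp [hab]⟩

end Biproduct

namespace ExactStructure

variable {S : ExactStructure E}

lemma mono_of_conf_s6 {X Y Z : E} {i : X ⟶ Y} {d : Y ⟶ Z} (h : S.conf i d) : Mono i where
  right_cancellation f g hfg := by
    obtain ⟨_, -, huniq⟩ := S.is_kernel h (f ≫ i) (by simp [S.comp_zero h])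
    rw [huniq f rfl, huniq g hfg.symm]

lemma epi_of_conf_s6 {X Y Z : E} {i : X ⟶ Y} {d : Y ⟶ Z} (h : S.conf i d) : Epi d where
  left_cancellation f g hfg := by
    obtain ⟨_, -, huniq⟩ := S.is_cokernel h (d ≫ f) (by simp [reassoc_of% S.comp_zero h])
    rw [huniq f rfl, huniq g hfg.symm]

lemma IsDeflation.epi {Y Z : E} {d : Y ⟶ Z} (h : S.IsDeflation d) : Epi d :=
  let ⟨_, _, h⟩ := h; epi_of_conf_s6 h

lemma conf_iso_left {X X' Y Z : E} {i : X ⟶ Y} {d : Y ⟶ Z} (h : S.conf i d) (e : X' ≅ X) :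
    S.conf (e.hom ≫ i) d := by
  simpa using S.conf_iso e.symm (Iso.refl Y) (Iso.refl Z) h

lemma conf_iso_mid {X Y Y' Z : E} {i : X ⟶ Y} {d : Y ⟶ Z} (h : S.conf i d) (e : Y ≅ Y') :
    S.conf (i ≫ e.hom) (e.inv ≫ d) := by
  simpa using S.conf_iso (Iso.refl X) e (Iso.refl Z) h

lemma conf_iso_right {X Y Z Z' : E} {i : X ⟶ Y} {d : Y ⟶ Z} (h : S.conf i d) (e : Z ≅ Z') :
    S.conf i (d ≫ e.hom) := by
  simpa using S.conf_iso (Iso.refl X) (Iso.refl Y) e h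

lemma conf_of_isKernel {X X' Y Z : E} {i : X ⟶ Y} {d : Y ⟶ Z} (h : S.conf i d) (i' : X' ⟶ Y)
    [Mono i'] (hi' : i' ≫ d = 0) (hfac : ∀ {W : E} (f : W ⟶ Y), f ≫ d = 0 → ∃ g, g ≫ i' = f) :
    S.conf i' d := by
  have := mono_of_conf_s6 h
  obtain ⟨a, ha⟩ := hfac i (S.comp_zero h)
  obtain ⟨b, hb, -⟩ := S.is_kernel h i' hi'
  simpa [hb] using conf_iso_left h ⟨b, a, by simp [← cancel_mono i', ha, hb],
    by simp [← cancel_mono i, ha, hb]⟩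

lemma conf_of_isCokernel {X Y Z Z' : E} {i : X ⟶ Y} {d : Y ⟶ Z} (h : S.conf i d) (d' : Y ⟶ Z')
    [Epi d'] (hd' : i ≫ d' = 0) (hfac : ∀ {W : E} (f : Y ⟶ W), i ≫ f = 0 → ∃ g, d' ≫ g = f) :
    S.conf i d' := by
  have := epi_of_conf_s6 h
  obtain ⟨a, ha⟩ := hfac d (S.comp_zero h)
  obtain ⟨b, hb, -⟩ := S.is_cokernel h d' hd'
  simpa [hb] using conf_iso_right h ⟨b, a, by simp [← cancel_epi d, reassoc_of% hb, ha],
    by simp [← cancel_epi d', reassoc_of% ha, hb]⟩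

lemma isDeflation_of_isPullback {P X Y Z : E} {p₁ : P ⟶ Y} {p₂ : P ⟶ X} {d : Y ⟶ Z}
    {f : X ⟶ Z} (hpb : IsPullback p₁ p₂ d f) (hd : S.IsDeflation d) : S.IsDeflation p₂ := by
  obtain ⟨P', p₁', p₂', hpb', K, k, hk⟩ := S.pullback_defl d f hd
  exact ⟨K, _, by simpa using conf_iso_mid hk (hpb.isoIsPullback _ _ hpb').symm⟩

lemma conf_of_isPushout {X Y Z W P : E} {i : X ⟶ Y} {d : Y ⟶ Z} (h : S.conf i d) {f : X ⟶ W}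
    {g : Y ⟶ P} {j : W ⟶ P} (hpo : IsPushout i f g j) :
    ∃ e : P ⟶ Z, S.conf j e ∧ g ≫ e = d := by
  obtain ⟨P', j', g', hpo', Z', d', h'⟩ := S.pushout_infl i f ⟨Z, d, h⟩
  have hw : i ≫ d = f ≫ 0 := by simp [S.comp_zero h]
  have := epi_of_conf_s6 h
  refine ⟨hpo.desc d 0 hw, ?_, by simp⟩
  have : Epi (hpo.desc d 0 hw) :=
    ⟨fun a b hab => (cancel_epi d).1 (by simpa using congrArg (g ≫ ·) hab)⟩
  refine conf_of_isCokernel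
    (by simpa using conf_iso_mid h' (hpo.isoIsPushout _ _ hpo').symm) _ (by simp) fun u hu => ?_
  obtain ⟨v, hv, -⟩ := S.is_cokernel h (g ≫ u) (by rw [hpo.w_assoc, hu, Limits.comp_zero])
  exact ⟨v, hpo.hom_ext (by simpa using hv) (by simp [hu])⟩

lemma conf_of_isPullback {X Y Z W P : E} {i : X ⟶ Y} {d : Y ⟶ Z} (h : S.conf i d) {f : W ⟶ Z}
    {p₁ : P ⟶ Y} {p₂ : P ⟶ W} (hpb : IsPullback p₁ p₂ d f) :
    ∃ w : X ⟶ P, S.conf w p₂ ∧ w ≫ p₁ = i := by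
  obtain ⟨K, k, hk⟩ := isDeflation_of_isPullback hpb ⟨X, i, h⟩
  have hw : i ≫ d = 0 ≫ f := by simp [S.comp_zero h]
  have := mono_of_conf_s6 h
  refine ⟨hpb.lift i 0 hw, ?_, by simp⟩
  have : Mono (hpb.lift i 0 hw) :=
    ⟨fun a b hab => (cancel_mono i).1 (by simpa using congrArg (· ≫ p₁) hab)⟩
  refine conf_of_isKernel hk _ (by simp) fun u hu => ?_
  obtain ⟨v, hv, -⟩ := S.is_kernel h (u ≫ p₁)
    (by rw [Category.assoc, hpb.w, reassoc_of% hu, zero_comp])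
  exact ⟨v, hpb.hom_ext (by simpa using hv) (by simp [hu])⟩

lemma conf_comp_of_isPullback {P Y Z K R : E} {q₁ : P ⟶ Y} {q₂ : P ⟶ K}
    {e : Y ⟶ Z} {κ : K ⟶ Z} {η : Z ⟶ R} (hpb : IsPullback q₁ q₂ e κ) (he : S.IsDeflation e)
    (hκ : S.conf κ η) : S.conf q₁ (e ≫ η) := by
  obtain ⟨_, _, h⟩ := S.defl_comp he ⟨_, _, hκ⟩
  have := mono_of_conf_s6 hκ
  have := hpb.mono_fst_of_mono
  refine conf_of_isKernel h q₁ (by rw [hpb.w_assoc, S.comp_zero hκ, Limits.comp_zero])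
    fun f hf => ?_
  obtain ⟨y, hy, -⟩ := S.is_kernel hκ (f ≫ e) (by simpa using hf)
  exact ⟨hpb.lift f y hy.symm, by simp⟩

lemma conf_id_zero (X : E) {Z : E} (hZ : IsZero Z) : S.conf (𝟙 X) (0 : X ⟶ Z) := by
  obtain ⟨e, he, -⟩ := conf_of_isPushout (S.conf_id 0) (IsPushout.zero_top X)
  simpa [hZ.eq_of_tgt (e ≫ _) 0] using
    conf_iso_right he ((isZero_zero E).isoZero ≪≫ hZ.isoZero.symm)

lemma hasBinaryBiproducts (S : ExactStructure E) : HasBinaryBiproducts E := by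
  have (A B : E) : HasLimit (pair A B) := by
    obtain ⟨P, p₁, p₂, hpb, -⟩ := S.pullback_defl (0 : A ⟶ 0) (0 : B ⟶ 0)
      ⟨A, 𝟙 A, S.conf_id_zero A (isZero_zero E)⟩
    exact HasLimit.mk ⟨BinaryFan.mk p₁ p₂,
      isProductOfIsTerminalIsPullback _ _ _ _ HasZeroObject.zeroIsTerminal hpb.isLimit⟩
  have := hasBinaryProducts_of_hasLimit_pair E
  exact HasBinaryBiproducts.of_hasBinaryProducts

lemma isPushout_of_conf_biprod_desc [HasBinaryBiproducts E] {G W k Y K : E} {μ : G ⟶ W}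
    {γ : G ⟶ k} {e : W ⟶ Y} {κ : k ⟶ Y} (hw : μ ≫ e = γ ≫ κ) {ι : K ⟶ W ⊞ k}
    (h : S.conf ι (biprod.desc e κ))
    (hker : ∀ {V : E} (f : V ⟶ W ⊞ k), f ≫ biprod.desc e κ = 0 →
      ∃ z : V ⟶ G, f = z ≫ biprod.lift μ (-γ)) :
    IsPushout μ γ e κ := by
  have := epi_of_conf_s6 h
  refine IsPushout.mk' hw (fun T φ φ' h₁ h₂ => ?_) fun T a b hab => ?_
  · exact (cancel_epi (biprod.desc e κ)).1 (by ext <;> simp [h₁, h₂])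
  · obtain ⟨z, hz⟩ := hker ι (S.comp_zero h)
    obtain ⟨l, hl, -⟩ := S.is_cokernel h (biprod.desc a b) (by simp [hz, hab])
    exact ⟨l, by simpa using congrArg (biprod.inl ≫ ·) hl,
      by simpa using congrArg (biprod.inr ≫ ·) hl⟩

/-- The obscure axiom (Bühler, *Exact categories*, Prop. 2.16). -/
lemma conf_of_isDeflation_comp {k W Y Z : E} {κ : k ⟶ Y} {d : Y ⟶ Z} [Mono κ] (hκ : κ ≫ d = 0)
    (hfac : ∀ {V : E} (f : V ⟶ Y), f ≫ d = 0 → ∃ g, g ≫ κ = f) {e : W ⟶ Y}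
    (he : S.IsDeflation (e ≫ d)) : S.conf κ d := by
  have := S.hasBinaryBiproducts
  obtain ⟨G, μ, hμ⟩ := he
  obtain ⟨γ, hγ⟩ := hfac (μ ≫ e) (by simpa using S.comp_zero hμ)
  -- `W ⊞ k → Y` is a deflation with kernel `G`, so `Y` is the pushout of `W ← G → k`.
  obtain ⟨K, ι, hι⟩ := isDeflation_of_isPullback (isPullback_biprod_desc hκ hfac e) ⟨G, μ, hμ⟩
  have hpo : IsPushout μ γ e κ := isPushout_of_conf_biprod_desc hγ.symm hι fun f hf => by
    obtain ⟨z, hz, -⟩ := S.is_kernel hμ (f ≫ biprod.fst)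
      (by simpa [biprod.desc_eq, hκ] using congrArg (· ≫ d) hf)
    refine ⟨z, biprod.hom_ext _ _ (by simp [hz]) ((cancel_mono κ).1 ?_)⟩
    have hf' : f ≫ biprod.fst ≫ e + f ≫ biprod.snd ≫ κ = 0 := by
      simpa [biprod.desc_eq] using hf
    simp [← hγ, ← reassoc_of% hz, eq_neg_of_add_eq_zero_right hf']
  obtain ⟨d', hd', hed'⟩ := conf_of_isPushout hμ hpo
  convert hd'
  exact hpo.hom_ext hed'.symm (by simp [hκ, S.comp_zero hd'])

lemma IsInflation.comp {K₀ K Y : E} {a₀ : K₀ ⟶ K} {a : K ⟶ Y} (h₀ : S.IsInflation a₀)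
    (h : S.IsInflation a) : S.IsInflation (a₀ ≫ a) := by
  have := S.hasBinaryBiproducts
  obtain ⟨A, p₀, hp₀⟩ := h₀
  obtain ⟨B, b, hb⟩ := h
  obtain ⟨P, j, g, hpo, -⟩ := S.pushout_infl a p₀ ⟨B, b, hb⟩
  obtain ⟨e, he, hge⟩ := conf_of_isPushout hb hpo
  have := mono_of_conf_s6 hp₀
  have := mono_of_conf_s6 hb
  have := mono_of_conf_s6 he
  have hD : S.IsDeflation (biprod.desc g j) :=
    isDeflation_of_isPullback (isPullback_biprod_desc (S.comp_zero he)
      (fun f hf => (S.is_kernel he f hf).exists) g) ⟨_, _, hge ▸ hb⟩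
  have hM : S.IsDeflation (biprod.map (𝟙 Y) p₀) :=
    isDeflation_of_isPullback (isPullback_biprod_map Y p₀) ⟨_, _, hp₀⟩
  -- `a₀ ≫ a` is a kernel of `g`, which becomes a composite of deflations after precomposition.
  have hcomp : biprod.map (𝟙 Y) p₀ ≫ biprod.desc g j = biprod.desc (𝟙 Y) a ≫ g := by
    ext <;> simp [hpo.w]
  refine ⟨P, g, conf_of_isDeflation_comp
    (by rw [Category.assoc, hpo.w, reassoc_of% S.comp_zero hp₀, zero_comp])
    (fun f hf => ?_) (hcomp ▸ S.defl_comp hM hD)⟩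
  obtain ⟨x, hx, -⟩ := S.is_kernel hb f (by rw [← hge, reassoc_of% hf, zero_comp])
  obtain ⟨y, hy, -⟩ := S.is_kernel hp₀ x
    ((cancel_mono j).1 (by simp [← hpo.w, reassoc_of% hx, hf]))
  exact ⟨y, by simp [reassoc_of% hy, hx]⟩

def op (S : ExactStructure E) : ExactStructure Eᵒᵖ where
  conf i d := S.conf d.unop i.unop
  comp_zero h := Quiver.Hom.unop_inj (by simpa using S.comp_zero h)
  is_kernel h _ f hf := by
    obtain ⟨g, hg, huniq⟩ := S.is_cokernel h f.unop (by simpa using congrArg Quiver.Hom.unop hf)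
    exact ⟨g.op, Quiver.Hom.unop_inj hg,
      fun g' hg' => Quiver.Hom.unop_inj (huniq _ (congrArg Quiver.Hom.unop hg'))⟩
  is_cokernel h _ f hf := by
    obtain ⟨g, hg, huniq⟩ := S.is_kernel h f.unop (by simpa using congrArg Quiver.Hom.unop hf)
    exact ⟨g.op, Quiver.Hom.unop_inj hg,
      fun g' hg' => Quiver.Hom.unop_inj (huniq _ (congrArg Quiver.Hom.unop hg'))⟩
  conf_iso eX eY eZ _ _ h := by
    simpa using S.conf_iso eZ.unop.symm eY.unop.symm eX.unop.symm h
  conf_id X := by simpa using S.conf_id_zero X.unop (isZero_zero Eᵒᵖ).unop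
  defl_comp := fun ⟨_, _, h⟩ ⟨_, _, h'⟩ => by
    obtain ⟨Z, c, hc⟩ := IsInflation.comp ⟨_, _, h'⟩ ⟨_, _, h⟩
    exact ⟨Opposite.op Z, c.op, hc⟩
  pullback_defl d f := fun ⟨_, _, h⟩ => by
    obtain ⟨P, j, g, hpo, Z, e, he⟩ := S.pushout_infl d.unop f.unop ⟨_, _, h⟩
    exact ⟨Opposite.op P, g.op, j.op, hpo.op.flip, Opposite.op Z, e.op, he⟩
  pushout_infl i f := fun ⟨_, _, h⟩ => by
    obtain ⟨P, p₁, p₂, hpb, A, k, hk⟩ := S.pullback_defl i.unop f.unop ⟨_, _, h⟩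
    exact ⟨Opposite.op P, p₂.op, p₁.op, hpb.op.flip, Opposite.op A, k.op, hk⟩

lemma IsInflation.op {X Y : E} {i : X ⟶ Y} (h : S.IsInflation i) : S.op.IsDeflation i.op :=
  let ⟨Z, d, h⟩ := h; ⟨Opposite.op Z, d.op, h⟩

lemma exists_retraction_iff_exists_section {X Y Z : E} {i : X ⟶ Y} {d : Y ⟶ Z}
    (h : S.conf i d) :
    (∃ ρ : Y ⟶ X, i ≫ ρ = 𝟙 X) ↔ ∃ σ : Z ⟶ Y, σ ≫ d = 𝟙 Z := by
  have := mono_of_conf_s6 h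
  have := epi_of_conf_s6 h
  constructor
  · rintro ⟨ρ, hρ⟩
    obtain ⟨σ, hσ, -⟩ := S.is_cokernel h (𝟙 Y - ρ ≫ i) (by simp [reassoc_of% hρ])
    exact ⟨σ, (cancel_epi d).1 (by simp [reassoc_of% hσ, S.comp_zero h])⟩
  · rintro ⟨σ, hσ⟩
    obtain ⟨ρ, hρ, -⟩ := S.is_kernel h (𝟙 Y - d ≫ σ) (by simp [hσ])
    exact ⟨ρ, (cancel_mono i).1 (by simp [hρ, reassoc_of% S.comp_zero h])⟩

end ExactStructure

/-- `Ext¹(T, F) = 0`, expressed as the splitting of every conflation `f → X → t` with `f ∈ F`,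
`t ∈ T`. -/
def Ext1Vanishes (S : ExactStructure E) (T F : Set E) : Prop :=
  ∀ {f' X t : E} (i : f' ⟶ X) (d : X ⟶ t), S.conf i d → f' ∈ F → t ∈ T →
    ∃ ρ : X ⟶ f', i ≫ ρ = 𝟙 f'

def PreservesConflations (S : ExactStructure E) (G : E ⥤ E) : Prop :=
  ∀ {X Y Z : E} (i : X ⟶ Y) (d : Y ⟶ Z), S.conf i d → S.conf (G.map i) (G.map d)

section Reflection

variable {C : Type*} [Category C]

def IsReflection (F : Set C) {X R : C} (η : X ⟶ R) : Prop :=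
  R ∈ F ∧ ∀ W ∈ F, ∀ f : X ⟶ W, ∃! g : R ⟶ W, η ≫ g = f

namespace IsReflection

variable {F : Set C} {X R : C} {η : X ⟶ R}

lemma hom_ext (hη : IsReflection F η) {W : C} (hW : W ∈ F) {g g' : R ⟶ W}
    (h : η ≫ g = η ≫ g') : g = g' :=
  (hη.2 W hW _).unique rfl h.symm

lemma exists_iso (hη : IsReflection F η) {R' : C} {η' : X ⟶ R'} (hη' : IsReflection F η') :
    ∃ e : R ≅ R', η ≫ e.hom = η' := by
  obtain ⟨a, ha, -⟩ := hη.2 R' hη'.1 η'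
  obtain ⟨b, hb, -⟩ := hη'.2 R hη.1 η
  exact ⟨⟨a, b, hη.hom_ext hη.1 (by simp [reassoc_of% ha, hb]),
    hη'.hom_ext hη'.1 (by simp [reassoc_of% hb, ha])⟩, ha⟩

lemma comp_of_isPushout {P M : C} {p : P ⟶ M} (hp : IsReflection F p) {Y : C} {i : X ⟶ Y}
    {u : Y ⟶ P} {j : R ⟶ P} (hpo : IsPushout i η u j) (hη : IsReflection F η) [Epi η] :
    IsReflection F (u ≫ p) := by
  refine ⟨hp.1, fun W hW f => ?_⟩
  obtain ⟨f₁, hf₁, -⟩ := hη.2 W hW (i ≫ f)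
  obtain ⟨g, hg, -⟩ := hp.2 W hW (hpo.desc f f₁ hf₁.symm)
  refine ⟨g, by simp [hg], fun g' hg' => hp.hom_ext hW (hpo.hom_ext ?_ ?_)⟩
  · simpa [hg] using hg'
  · refine (cancel_epi η).1 ?_
    rw [← Category.assoc, ← hpo.w]
    simpa [hg, hf₁] using congrArg (i ≫ ·) hg'

end IsReflection

lemma isZero_of_mem_homOrthLeft [Preadditive C] {F : Set C} {t Rt : C}
    (ht : t ∈ homOrthLeft F) {η : t ⟶ Rt} (hη : IsReflection F η) [Epi η] : IsZero Rt :=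
  (IsZero.iff_id_eq_zero Rt).2 ((cancel_epi η).1 (by simp [ht _ hη.1 η]))

lemma homOrthLeft_op [Preadditive C] (T : Set C) : homOrthLeft T.op = (homOrthRight T).op := by
  ext X
  exact ⟨fun h t ht f => Quiver.Hom.op_inj (h (Opposite.op t) ht f.op),
    fun h t ht f => Quiver.Hom.unop_inj (h t.unop ht f.unop)⟩

lemma isReflection_unit_app {F : Set C} {l : C ⥤ ObjectProperty.FullSubcategory (· ∈ F)}
    (adj : l ⊣ ObjectProperty.ι (· ∈ F)) (X : C) : IsReflection F (adj.unit.app X) := by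
  refine ⟨(l.obj X).property, fun W hW f => ?_⟩
  obtain ⟨g, hg, huniq⟩ := (adj.homEquiv X ⟨W, hW⟩).bijective.existsUnique f
  rw [Adjunction.homEquiv_unit] at hg
  refine ⟨g.hom, hg, fun g' hg' => ?_⟩
  rw [← huniq (ObjectProperty.homMk g') (by beta_reduce; rwa [Adjunction.homEquiv_unit])]
  rfl

lemma isReflection_op_counit_app {T : Set C} {r : C ⥤ ObjectProperty.FullSubcategory (· ∈ T)}
    (adj : ObjectProperty.ι (· ∈ T) ⊣ r) (X : Cᵒᵖ) :
    IsReflection T.op (adj.counit.app X.unop).op := by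
  refine ⟨(r.obj X.unop).property, fun W hW f => ?_⟩
  obtain ⟨g, hg, huniq⟩ :=
    (adj.homEquiv ⟨W.unop, Set.mem_op.1 hW⟩ X.unop).symm.bijective.existsUnique f.unop
  rw [Adjunction.homEquiv_counit] at hg
  refine ⟨g.hom.op, Quiver.Hom.unop_inj hg, fun g' hg' => Quiver.Hom.unop_inj ?_⟩
  rw [← huniq (ObjectProperty.homMk g'.unop)
    (by beta_reduce; rw [Adjunction.homEquiv_counit]; exact congrArg Quiver.Hom.unop hg')]
  rfl

end Reflection

section Admissible

variable {S : ExactStructure E} {F : Set E}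

lemma mem_homOrthLeft_of_conf (hFext : ExtClosed S F) {K Z R : E} {κ : K ⟶ Z} {η : Z ⟶ R}
    (hη : IsReflection F η) (h : S.conf κ η) : K ∈ homOrthLeft F := by
  intro W hW g
  obtain ⟨P, j, g', hpo, -⟩ := S.pushout_infl κ g ⟨_, _, h⟩
  obtain ⟨e, he, -⟩ := S.conf_of_isPushout h hpo
  obtain ⟨ψ, hψ, -⟩ := hη.2 P (hFext he hW hη.1) g'
  have := S.mono_of_conf_s6 he
  rw [← cancel_mono j, ← hpo.w, ← hψ, reassoc_of% S.comp_zero h, zero_comp, zero_comp]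

lemma exists_conf_isReflection (hFext : ExtClosed S F)
    (hsplit : Ext1Vanishes S (homOrthLeft F) F)
    {A P Z RZ : E} {j : A ⟶ P} {e : P ⟶ Z} (hje : S.conf j e) (hA : A ∈ F) {η : Z ⟶ RZ}
    (hη : IsReflection F η) (hηd : S.IsDeflation η) :
    ∃ (M : E) (p : P ⟶ M) (e' : M ⟶ RZ),
      IsReflection F p ∧ S.conf (j ≫ p) e' ∧ p ≫ e' = e ≫ η := by
  obtain ⟨K, κ, hκ⟩ := hηd
  have hK : K ∈ homOrthLeft F := mem_homOrthLeft_of_conf hFext hη hκ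
  obtain ⟨Q, q₁, q₂, hpb, -⟩ := S.pullback_defl e κ ⟨_, _, hje⟩
  obtain ⟨ω, hω, hωq⟩ := S.conf_of_isPullback hje hpb
  obtain ⟨ρ, hρ⟩ := hsplit ω q₂ hω hA hK
  have hq := S.conf_comp_of_isPullback hpb ⟨_, _, hje⟩ hκ
  obtain ⟨M, j', p, hpo, -⟩ := S.pushout_infl q₁ ρ ⟨_, _, hq⟩
  obtain ⟨e', he', hpe'⟩ := S.conf_of_isPushout hq hpo
  have hjp : j ≫ p = j' := by rw [← hωq, Category.assoc, hpo.w, reassoc_of% hρ]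
  refine ⟨M, p, e', ⟨hFext he' hA hη.1, fun W hW f => ?_⟩, hjp ▸ he', hpe'⟩
  have hw : q₁ ≫ f = ρ ≫ j ≫ f := by
    obtain ⟨c, hc, -⟩ := S.is_cokernel hω (q₁ ≫ f - ρ ≫ j ≫ f)
      (by simp [reassoc_of% hωq, reassoc_of% hρ])
    rw [← sub_eq_zero, ← hc, hK W hW c, Limits.comp_zero]
  refine ⟨hpo.desc f (j ≫ f) hw, by simp, fun g hg => hpo.hom_ext ?_ ?_⟩
  · simpa using hg
  · simp [← hjp, hg]

lemma conf_of_isReflection (hFext : ExtClosed S F) (hsplit : Ext1Vanishes S (homOrthLeft F) F)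
    {X Y Z RX RY RZ : E} {i : X ⟶ Y} {d : Y ⟶ Z} (h : S.conf i d) {ηX : X ⟶ RX} {ηY : Y ⟶ RY}
    {ηZ : Z ⟶ RZ} (hX : IsReflection F ηX) (hXd : S.IsDeflation ηX) (hY : IsReflection F ηY)
    (hZ : IsReflection F ηZ) (hZd : S.IsDeflation ηZ) {i' : RX ⟶ RY} {d' : RY ⟶ RZ}
    (hi' : ηX ≫ i' = i ≫ ηY) (hd' : ηY ≫ d' = d ≫ ηZ) : S.conf i' d' := by
  obtain ⟨P, j, u, hpo, -⟩ := S.pushout_infl i ηX ⟨_, _, h⟩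
  obtain ⟨e, he, hue⟩ := S.conf_of_isPushout h hpo
  obtain ⟨M, p, e', hp, hconf, hpe'⟩ := exists_conf_isReflection hFext hsplit he hX.1 hZ hZd
  have := hXd.epi
  obtain ⟨φ, hφ⟩ := hY.exists_iso (hp.comp_of_isPushout hpo hX)
  have hi : i' = (j ≫ p) ≫ φ.inv :=
    hX.hom_ext hY.1 (by simp [hi', ← reassoc_of% hpo.w, ← reassoc_of% hφ])
  have hd : d' = φ.hom ≫ e' :=
    hY.hom_ext hZ.1 (by simp [hd', reassoc_of% hφ, hpe', reassoc_of% hue])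
  simpa [hi, hd] using S.conf_iso_mid hconf φ.symm

lemma exists_retraction_of_conf_isReflection {f X Rf RX Rt : E} {i : f ⟶ X} (hf : f ∈ F)
    {ηf : f ⟶ Rf} {ηX : X ⟶ RX} (hηf : IsReflection F ηf) {i' : Rf ⟶ RX} {d' : RX ⟶ Rt}
    (hi' : ηf ≫ i' = i ≫ ηX) (h' : S.conf i' d') (hRt : IsZero Rt) :
    ∃ ρ : X ⟶ f, i ≫ ρ = 𝟙 f := by
  obtain ⟨σ, hσ, -⟩ := S.is_kernel h' (𝟙 RX) (hRt.eq_of_tgt _ _)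
  have := S.mono_of_conf_s6 h'
  have hi'σ : i' ≫ σ = 𝟙 Rf := (cancel_mono i').1 (by simp [hσ])
  obtain ⟨τ, hτ, -⟩ := hηf.2 f hf (𝟙 f)
  exact ⟨ηX ≫ σ ≫ τ, by rw [← reassoc_of% hi', reassoc_of% hi'σ, hτ]⟩

theorem ext1Vanishes_iff_preservesConflations (hFext : ExtClosed S F) {G : E ⥤ E}
    (η : 𝟭 E ⟶ G) (hη : ∀ X, IsReflection F (η.app X)) (hηd : ∀ X, S.IsDeflation (η.app X)) :
    Ext1Vanishes S (homOrthLeft F) F ↔ PreservesConflations S G := by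
  refine ⟨fun hsplit _ _ _ i d h => conf_of_isReflection hFext hsplit h (hη _) (hηd _) (hη _)
    (hη _) (hηd _) (η.naturality i).symm (η.naturality d).symm, fun hG _ _ t i d h hf ht => ?_⟩
  have := (hηd t).epi
  exact exists_retraction_of_conf_isReflection hf (hη _) (η.naturality i).symm (hG i d h)
    (isZero_of_mem_homOrthLeft ht (hη _))

end Admissible

section Opposite

variable {S : ExactStructure E}

lemma ext1Vanishes_op_iff {A B : Set E} :
    Ext1Vanishes S.op A.op B.op ↔ Ext1Vanishes S B A := by
  constructor
  · intro h _ _ _ i d hconf ha hb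
    obtain ⟨σ, hσ⟩ := h d.op i.op hconf hb ha
    exact (S.exists_retraction_iff_exists_section hconf).2 ⟨σ.unop, congrArg Quiver.Hom.unop hσ⟩
  · intro h _ _ _ i d hconf hb ha
    obtain ⟨σ, hσ⟩ := (S.exists_retraction_iff_exists_section hconf).1 (h _ _ hconf ha hb)
    exact ⟨σ.op, Quiver.Hom.unop_inj hσ⟩

lemma preservesConflations_op_iff {G : E ⥤ E} :
    PreservesConflations S.op G.op ↔ PreservesConflations S G :=
  ⟨fun h _ _ _ i d hconf => h d.op i.op hconf, fun h _ _ _ i d hconf => h d.unop i.unop hconf⟩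

lemma ExtClosed.op {T : Set E} (hT : ExtClosed S T) : ExtClosed S.op T.op :=
  fun h hX hZ => hT h hZ hX

end Opposite

/-- A weakly left admissible subcategory `F` of an exact category `E`
(the inclusion `δ_*` has a left adjoint `δ^* = l` whose unit is a deflation) is left
admissible, i.e. `Ext¹(^{⊥₀}F, F) = 0` (every conflation `f' → X → t` with `f' ∈ F`,
`t ∈ ^{⊥₀}F` splits), if and only if `δ^*` is exact.  Dually, a weakly right admissible
`T` is right admissible (`Ext¹(T, T^{⊥₀}) = 0`) if and only if the right adjoint
`ι^! = r` of the inclusion is exact. -/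
theorem admissible_iff_adjoint_exact
    (S : ExactStructure E) (F T : Set E)
    (hFext : ExtClosed S F) (hText : ExtClosed S T)
    -- δ^* ⊣ δ_* with deflation units (weak left admissibility of F)
    (l : E ⥤ ObjectProperty.FullSubcategory (· ∈ F))
    (adjF : l ⊣ ObjectProperty.ι (· ∈ F))
    (hunit : ∀ X : E, S.IsDeflation (adjF.unit.app X))
    -- ι_* ⊣ ι^! with inflation counits (weak right admissibility of T)
    (r : E ⥤ ObjectProperty.FullSubcategory (· ∈ T))
    (adjT : ObjectProperty.ι (· ∈ T) ⊣ r)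
    (hcounit : ∀ X : E, S.IsInflation (adjT.counit.app X)) :
    ((∀ {f' X t : E} (i : f' ⟶ X) (d : X ⟶ t), S.conf i d →
        f' ∈ F → t ∈ homOrthLeft F → ∃ ρ : X ⟶ f', i ≫ ρ = 𝟙 f') ↔
      (∀ {X Y Z : E} (i : X ⟶ Y) (d : Y ⟶ Z), S.conf i d →
        S.conf ((l ⋙ ObjectProperty.ι (· ∈ F)).map i)
          ((l ⋙ ObjectProperty.ι (· ∈ F)).map d))) ∧
    ((∀ {f'' X t'' : E} (i : f'' ⟶ X) (d : X ⟶ t''), S.conf i d →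
        f'' ∈ homOrthRight T → t'' ∈ T → ∃ ρ : X ⟶ f'', i ≫ ρ = 𝟙 f'') ↔
      (∀ {X Y Z : E} (i : X ⟶ Y) (d : Y ⟶ Z), S.conf i d →
        S.conf ((r ⋙ ObjectProperty.ι (· ∈ T)).map i)
          ((r ⋙ ObjectProperty.ι (· ∈ T)).map d))) := by
  refine ⟨ext1Vanishes_iff_preservesConflations hFext adjF.unit (isReflection_unit_app adjF)
    hunit, ?_⟩
  have hT := ext1Vanishes_iff_preservesConflations hText.op (NatTrans.op adjT.counit)
    (isReflection_op_counit_app adjT) fun X => (hcounit X.unop).op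
  rwa [homOrthLeft_op, ext1Vanishes_op_iff, preservesConflations_op_iff] at hT

end ExactCatPaper
end
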